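/- Let A, B, C be n×n max-plus matrices with A regular, let D = B ⊕ C⊗A satisfy Tr(D) ≤ 0, and let f ∈ ℝ^n be regular. For pairs (x,y) of regular vectors satisfying A⊗x = y, B⊗x ≤ x, C⊗y ≤ x, and y ≤ f, the minimum of max_i y_i − min_i y_i equals Δ = (A ⊗ D* ⊗ (1ᵀ ⊗ A ⊗ D*)^-)^- ⊗ 1, and it is attained at x = α ⊗ D* ⊗ (1ᵀ ⊗ A ⊗ D*)^-, y = A ⊗ x, for any scalar α ≤ (f^- ⊗ A ⊗ D* ⊗ (1ᵀ ⊗ A ⊗ D*)^-)^{-1}. -/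

import Mathlib

open Finset

abbrev MP := WithBot ℝ

/-- Negation (max-plus multiplicative inverse), fixing -∞. -/
def mneg : MP → MP := WithBot.map Neg.neg

/-- Max-plus matrix multiplication. -/
def mpMul {l m n : ℕ} (A : Fin l → Fin m → MP) (B : Fin m → Fin n → MP) :
    Fin l → Fin n → MP :=
  fun i j => Finset.univ.sup fun k => A i k + B k j

/-- Max-plus matrix-vector product. -/
def mpMulVec {m n : ℕ} (A : Fin m → Fin n → MP) (v : Fin n → MP) : Fin m → MP :=
  fun i => Finset.univ.sup fun j => A i j + v j

/-- The max-plus identity matrix. -/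
def mpId (n : ℕ) : Fin n → Fin n → MP := fun i j => if i = j then (0 : MP) else ⊥

/-- Max-plus matrix power. -/
def mpPow {n : ℕ} (A : Fin n → Fin n → MP) : ℕ → (Fin n → Fin n → MP)
  | 0 => mpId n
  | k + 1 => mpMul (mpPow A k) A

/-- Max-plus trace. -/
def mptr {n : ℕ} (A : Fin n → Fin n → MP) : MP := Finset.univ.sup fun i => A i i

/-- Kleene star: D* = I ⊕ D ⊕ ⋯ ⊕ D^{n-1}. -/
def mpStar {n : ℕ} (D : Fin n → Fin n → MP) : Fin n → Fin n → MP :=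
  (Finset.range n).sup fun k => mpPow D k

/-- The matrix D = B ⊕ C ⊗ A. -/
noncomputable def matD {n : ℕ} (A B C : Fin n → Fin n → MP) : Fin n → Fin n → MP :=
  fun i j => B i j ⊔ mpMul C A i j

/-- A ⊗ D*. -/
noncomputable def matAD {n : ℕ} (A B C : Fin n → Fin n → MP) : Fin n → Fin n → MP :=
  mpMul A (mpStar (matD A B C))

/-- The vector (1ᵀ ⊗ A ⊗ D*)⁻. -/
noncomputable def vecV {n : ℕ} (A B C : Fin n → Fin n → MP) : Fin n → MP :=
  fun j => mneg (Finset.univ.sup fun i => matAD A B C i j)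

/-- Δ = (A ⊗ D* ⊗ (1ᵀ ⊗ A ⊗ D*)⁻)⁻ ⊗ 1. -/
noncomputable def Delta {n : ℕ} (A B C : Fin n → Fin n → MP) : MP :=
  Finset.univ.sup fun i => mneg (mpMulVec (matAD A B C) (vecV A B C) i)

/-- The candidate start times x = α ⊗ D* ⊗ (1ᵀ ⊗ A ⊗ D*)⁻. -/
noncomputable def xcand {n : ℕ} (A B C : Fin n → Fin n → MP) (α : ℝ) : Fin n → MP :=
  fun j => ((α : ℝ) : MP) + mpMulVec (mpStar (matD A B C)) (vecV A B C) j

/-- The objective 1ᵀ ⊗ y ⊗ y⁻ ⊗ 1 = max_i yᵢ - min_i yᵢ. -/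
def obj {n : ℕ} (y : Fin n → MP) : MP :=
  (Finset.univ.sup fun i => y i) + (Finset.univ.sup fun i => mneg (y i))

section lems
lemma add_sup' (c x y : MP) : c + (x ⊔ y) = (c + x) ⊔ (c + y) := by
  rcases le_total x y with h | h
  · rw [sup_eq_right.2 h, sup_eq_right.2 (add_le_add_right h c)]
  · rw [sup_eq_left.2 h, sup_eq_left.2 (add_le_add_right h c)]

lemma sup_add' (x y c : MP) : (x ⊔ y) + c = (x + c) ⊔ (y + c) := by
  rw [add_comm, add_sup', add_comm x c, add_comm y c]

lemma sup_const_add {ι : Type*} (s : Finset ι) (c : MP) (f : ι → MP) :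
    s.sup (fun j => c + f j) = c + s.sup f := by
  rw [show (fun j => c + f j) = (c + ·) ∘ f from rfl,
    ← Finset.comp_sup_eq_sup_comp (c + ·) (fun x y => add_sup' c x y) (by simp)]

lemma sup_add_const {ι : Type*} (s : Finset ι) (f : ι → MP) (c : MP) :
    s.sup (fun j => f j + c) = s.sup f + c := by
  rw [show (fun j => f j + c) = (· + c) ∘ f from rfl,
    ← Finset.comp_sup_eq_sup_comp (· + c) (fun x y => sup_add' x y c) (by simp)]

lemma mpMulVec_assoc {l m n : ℕ} (P : Fin l → Fin m → MP) (Q : Fin m → Fin n → MP)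
    (w : Fin n → MP) : mpMulVec (mpMul P Q) w = mpMulVec P (mpMulVec Q w) := by
  funext i
  simp only [mpMulVec, mpMul]
  calc (Finset.univ.sup fun j => (Finset.univ.sup fun k => P i k + Q k j) + w j)
      = Finset.univ.sup (fun j => Finset.univ.sup fun k => (P i k + Q k j) + w j) := by
        simp_rw [sup_add_const]
    _ = Finset.univ.sup (fun k => Finset.univ.sup fun j => P i k + (Q k j + w j)) := by
        rw [Finset.sup_comm]; simp_rw [add_assoc]
    _ = Finset.univ.sup fun k => P i k + Finset.univ.sup fun j => Q k j + w j := by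
        simp_rw [sup_const_add]

lemma mpMul_assoc {l m n p : ℕ} (P : Fin l → Fin m → MP) (Q : Fin m → Fin n → MP)
    (R : Fin n → Fin p → MP) : mpMul (mpMul P Q) R = mpMul P (mpMul Q R) := by
  funext i j
  have := congrFun (mpMulVec_assoc P Q (fun k => R k j)) i
  simpa [mpMulVec, mpMul] using this

lemma mpMulVec_mono {m n : ℕ} (A : Fin m → Fin n → MP) {v w : Fin n → MP}
    (h : ∀ j, v j ≤ w j) (i : Fin m) : mpMulVec A v i ≤ mpMulVec A w i := by
  apply Finset.sup_le
  intro j _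
  exact le_trans (add_le_add_right (h j) _)
    (Finset.le_sup (f := fun j => A i j + w j) (Finset.mem_univ j))

lemma mpMulVec_mono_mat {m n : ℕ} {A B : Fin m → Fin n → MP} (h : ∀ i j, A i j ≤ B i j)
    (v : Fin n → MP) (i : Fin m) : mpMulVec A v i ≤ mpMulVec B v i := by
  apply Finset.sup_le
  intro j _
  exact le_trans (add_le_add_left (h i j) _)
    (Finset.le_sup (f := fun j => B i j + v j) (Finset.mem_univ j))

lemma mpMulVec_shift {m n : ℕ} (A : Fin m → Fin n → MP) (c : MP) (w : Fin n → MP) (i : Fin m) :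
    mpMulVec A (fun j => c + w j) i = c + mpMulVec A w i := by
  simp only [mpMulVec]
  rw [← sup_const_add]
  congr 1; funext j; rw [← add_assoc, add_comm (A i j) c, add_assoc]
end lems

section star
variable {n : ℕ} (D : Fin n → Fin n → MP)

lemma mpId_mulVec (v : Fin n → MP) : mpMulVec (mpId n) v = v := by
  funext i
  simp only [mpMulVec, mpId]
  apply le_antisymm
  · apply Finset.sup_le; intro j _
    by_cases h : i = j
    · subst h; simp
    · simp [h]
  · refine le_trans ?_ (Finset.le_sup (f := fun j => (if i = j then (0:MP) else ⊥) + v j)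
      (Finset.mem_univ i))
    simp

/-- weight of path of length m -/
def pW (m : ℕ) (p : ℕ → Fin n) : MP := ∑ t ∈ Finset.range m, D (p t) (p (t+1))

lemma pW_le_pow (m : ℕ) (p : ℕ → Fin n) : pW D m p ≤ mpPow D m (p 0) (p m) := by
  induction m with
  | zero => simp [pW, mpPow, mpId]
  | succ m ih =>
      rw [pW, Finset.sum_range_succ]
      calc (∑ t ∈ Finset.range m, D (p t) (p (t+1))) + D (p m) (p (m+1))
          ≤ mpPow D m (p 0) (p m) + D (p m) (p (m+1)) := add_le_add_left ih _
        _ ≤ mpPow D (m+1) (p 0) (p (m+1)) :=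
            Finset.le_sup (f := fun k => mpPow D m (p 0) k + D k (p (m+1))) (Finset.mem_univ _)

lemma pow_exists_path (hn : 0 < n) (m : ℕ) (i j : Fin n) :
    mpPow D m i j = ⊥ ∨ ∃ p : ℕ → Fin n, p 0 = i ∧ p m = j ∧ mpPow D m i j = pW D m p := by
  induction m generalizing j with
  | zero =>
      by_cases h : i = j
      · subst h; right; exact ⟨fun _ => i, rfl, rfl, by simp [mpPow, mpId, pW]⟩
      · left; simp [mpPow, mpId, h]
  | succ m ih =>
      have : Nonempty (Fin n) := ⟨⟨0, hn⟩⟩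
      have hne : (Finset.univ : Finset (Fin n)).Nonempty := Finset.univ_nonempty
      obtain ⟨l, _, hl⟩ := Finset.exists_mem_eq_sup Finset.univ hne
        (fun k => mpPow D m i k + D k j)
      have hpow : mpPow D (m+1) i j = mpPow D m i l + D l j := hl
      rcases ih l with hbot | ⟨p', h0, hm, hW⟩
      · left; rw [hpow, hbot, WithBot.bot_add]
      · right
        refine ⟨fun t => if t = m + 1 then j else p' t, by simp [h0], by simp, ?_⟩
        rw [hpow, pW, Finset.sum_range_succ]
        have : ∀ t ∈ Finset.range m,
            D (if t = m+1 then j else p' t) (if t+1 = m+1 then j else p' (t+1))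
              = D (p' t) (p' (t+1)) := by
          intro t ht
          have ht' := Finset.mem_range.1 ht
          rw [if_neg (by omega), if_neg (by omega)]
        rw [Finset.sum_congr rfl this, if_neg (by omega), if_pos rfl, hm, ← pW, ← hW]

lemma pow_le_star_of_tr (hn : 0 < n)
    (hD : ∀ k, 1 ≤ k → k ≤ n → mptr (mpPow D k) ≤ (0 : MP)) (i j : Fin n) :
    mpPow D n i j ≤ mpStar D i j := by
  rcases pow_exists_path D hn n i j with hbot | ⟨p, h0, hm, hW⟩
  · rw [hbot]; exact bot_le
  · -- pigeonhole
    have hcard : Fintype.card (Fin n) < Fintype.card (Fin (n+1)) := by simp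
    obtain ⟨a, b, hab, heq⟩ := Fintype.exists_ne_map_eq_of_card_lt
      (fun t : Fin (n+1) => p t) hcard
    -- wlog a < b
    obtain ⟨s, t, hst, hnt, hpq⟩ : ∃ s t : ℕ, s < t ∧ t ≤ n ∧ p s = p t := by
      rcases lt_or_gt_of_ne hab with h | h
      · exact ⟨a, b, h, Nat.lt_succ_iff.1 b.isLt, heq⟩
      · exact ⟨b, a, h, Nat.lt_succ_iff.1 a.isLt, heq.symm⟩
    set k := t - s with hk
    have hk1 : 1 ≤ k := by omega
    have hkn : k ≤ n := by omega
    -- cycle weight ≤ 0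
    have hcyc : (∑ u ∈ Finset.Ico s t, D (p u) (p (u+1))) ≤ (0 : MP) := by
      rw [Finset.sum_Ico_eq_sum_range]
      have : (∑ u ∈ Finset.range (t - s), D (p (s + u)) (p (s + u + 1)))
          = pW D k (fun u => p (s + u)) := by
        apply Finset.sum_congr rfl
        intro u _
        congr 2 <;> omega
      rw [this]
      calc pW D k (fun u => p (s + u)) ≤ mpPow D k (p s) (p (s + k)) :=
            pW_le_pow D k _
        _ ≤ mptr (mpPow D k) := by
            have : p (s + k) = p s := by rw [show s + k = t by omega, ← hpq]
            rw [this]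
            exact Finset.le_sup (f := fun i => mpPow D k i i) (Finset.mem_univ _)
        _ ≤ 0 := hD k hk1 hkn
    -- shortened path
    set q : ℕ → Fin n := fun u => if u < s then p u else p (u + k) with hq
    have hterm : ∀ u, u < n - k →
        D (q u) (q (u+1)) = if u < s then D (p u) (p (u+1)) else D (p (u+k)) (p (u+k+1)) := by
      intro u hu
      by_cases h : u < s
      · rw [if_pos h]
        by_cases h1 : u + 1 < s
        · simp only [hq, if_pos h, if_pos h1]
        · have h2 : u + 1 = s := by omega
          simp only [hq, if_pos h, if_neg (by omega : ¬ u + 1 < s)]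
          rw [h2, show s + k = t by omega, ← hpq]
      · rw [if_neg h]
        simp only [hq, if_neg h, if_neg (by omega : ¬ u + 1 < s)]
        rw [show u + 1 + k = u + k + 1 by omega]
    have hWq : pW D (n - k) q = (∑ u ∈ Finset.Ico 0 s, D (p u) (p (u+1)))
        + (∑ u ∈ Finset.Ico t n, D (p u) (p (u+1))) := by
      have hsplit : pW D (n-k) q = (∑ u ∈ Finset.Ico 0 s, D (q u) (q (u+1)))
          + (∑ u ∈ Finset.Ico s (n-k), D (q u) (q (u+1))) := by
        rw [pW, Finset.range_eq_Ico, ← Finset.sum_Ico_consecutive _ (Nat.zero_le s) (by omega)]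
      rw [hsplit]
      congr 1
      · apply Finset.sum_congr rfl
        intro u hu
        have hu' : u < s := (Finset.mem_Ico.1 hu).2
        rw [hterm u (by omega), if_pos hu']
      · rw [Finset.sum_Ico_eq_sum_range, Finset.sum_Ico_eq_sum_range]
        have hlen : n - k - s = n - t := by omega
        rw [hlen]
        apply Finset.sum_congr rfl
        intro u hu
        have hu' : u < n - t := Finset.mem_range.1 hu
        rw [hterm (s + u) (by omega), if_neg (by omega), show s + u + k = t + u by omega]
    have hsplit3 : pW D n p = (∑ u ∈ Finset.Ico 0 s, D (p u) (p (u+1)))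
        + ((∑ u ∈ Finset.Ico s t, D (p u) (p (u+1)))
          + (∑ u ∈ Finset.Ico t n, D (p u) (p (u+1)))) := by
      rw [pW, Finset.range_eq_Ico,
        ← Finset.sum_Ico_consecutive _ (Nat.zero_le s) (by omega : s ≤ n),
        ← Finset.sum_Ico_consecutive _ (le_of_lt hst) hnt]
    have hle : pW D n p ≤ pW D (n - k) q := by
      rw [hsplit3, hWq]
      apply add_le_add_right
      calc (∑ u ∈ Finset.Ico s t, D (p u) (p (u+1)))
            + (∑ u ∈ Finset.Ico t n, D (p u) (p (u+1)))
          ≤ 0 + (∑ u ∈ Finset.Ico t n, D (p u) (p (u+1))) := add_le_add_left hcyc _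
        _ = _ := zero_add _
    have hq0 : q 0 = i := by
      by_cases h : 0 < s
      · simpa [hq, h] using h0
      · have hs0 : s = 0 := by omega
        simp only [hq, if_neg (by omega : ¬ (0:ℕ) < s), zero_add]
        rw [show k = t by omega, ← hpq, hs0, h0]
    have hqn : q (n - k) = j := by
      simp only [hq, if_neg (by omega : ¬ n - k < s)]
      rw [show n - k + k = n by omega, hm]
    calc mpPow D n i j = pW D n p := hW
      _ ≤ pW D (n-k) q := hle
      _ ≤ mpPow D (n-k) (q 0) (q (n-k)) := pW_le_pow D _ q
      _ = mpPow D (n-k) i j := by rw [hq0, hqn]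
      _ ≤ mpStar D i j := by
          have h2 : mpPow D (n-k) ≤ mpStar D :=
            Finset.le_sup (f := fun k => mpPow D k) (Finset.mem_range.2 (by omega))
          exact h2 i j

lemma mpMul_id {m : ℕ} (P : Fin m → Fin n → MP) : mpMul P (mpId n) = P := by
  funext i j
  simp only [mpMul, mpId]
  apply le_antisymm
  · apply Finset.sup_le; intro k _
    by_cases h : k = j
    · subst h; simp
    · simp [h]
  · refine le_trans ?_ (Finset.le_sup (f := fun k => P i k + if k = j then (0:MP) else ⊥)
      (Finset.mem_univ j))
    simp

lemma id_mpMul {m : ℕ} (P : Fin n → Fin m → MP) : mpMul (mpId n) P = P := by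
  funext i j
  exact congrFun (mpId_mulVec (fun k => P k j)) i

lemma mpPow_succ_comm (k : ℕ) : mpMul D (mpPow D k) = mpPow D (k+1) := by
  induction k with
  | zero => show mpMul D (mpId n) = mpMul (mpId n) D; rw [mpMul_id, id_mpMul]
  | succ k ih =>
      show mpMul D (mpMul (mpPow D k) D) = mpMul (mpPow D (k+1)) D
      rw [← mpMul_assoc, ih]

lemma star_mulVec_eq (x : Fin n → MP) (i : Fin n) :
    mpMulVec (mpStar D) x i = (Finset.range n).sup (fun k => mpMulVec (mpPow D k) x i) := by
  simp only [mpMulVec, mpStar]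
  calc (Finset.univ.sup fun j => ((Finset.range n).sup fun k => mpPow D k) i j + x j)
      = Finset.univ.sup (fun j => (Finset.range n).sup fun k => mpPow D k i j + x j) := by
        apply Finset.sup_congr rfl
        intro j _
        rw [Finset.sup_apply, Finset.sup_apply, sup_add_const]
    _ = (Finset.range n).sup (fun k => Finset.univ.sup fun j => mpPow D k i j + x j) :=
        Finset.sup_comm _ _ _

lemma pow_mulVec_le_star (hn : 0 < n)
    (hD : ∀ k, 1 ≤ k → k ≤ n → mptr (mpPow D k) ≤ (0 : MP)) {m : ℕ} (hm : m ≤ n)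
    (x : Fin n → MP) (i : Fin n) :
    mpMulVec (mpPow D m) x i ≤ mpMulVec (mpStar D) x i := by
  rcases lt_or_eq_of_le hm with h | h
  · rw [star_mulVec_eq]
    exact Finset.le_sup (f := fun k => mpMulVec (mpPow D k) x i) (Finset.mem_range.2 h)
  · subst h
    exact mpMulVec_mono_mat (pow_le_star_of_tr D hn hD) x i

lemma star_fix (hn : 0 < n)
    (hD : ∀ k, 1 ≤ k → k ≤ n → mptr (mpPow D k) ≤ (0 : MP)) (x : Fin n → MP) (i : Fin n) :
    mpMulVec D (mpMulVec (mpStar D) x) i ≤ mpMulVec (mpStar D) x i := by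
  have h1 : ∀ j, mpMulVec (mpStar D) x j
      = (Finset.range n).sup (fun k => mpMulVec (mpPow D k) x j) := star_mulVec_eq D x
  calc mpMulVec D (mpMulVec (mpStar D) x) i
      = Finset.univ.sup (fun j => D i j
          + (Finset.range n).sup fun k => mpMulVec (mpPow D k) x j) := by
        apply Finset.sup_congr rfl
        intro j _
        rw [h1 j]
    _ = Finset.univ.sup (fun j => (Finset.range n).sup fun k =>
          D i j + mpMulVec (mpPow D k) x j) := by
        apply Finset.sup_congr rfl
        intro j _
        rw [sup_const_add]
    _ = (Finset.range n).sup (fun k => Finset.univ.sup fun j =>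
          D i j + mpMulVec (mpPow D k) x j) := Finset.sup_comm _ _ _
    _ ≤ mpMulVec (mpStar D) x i := by
        apply Finset.sup_le
        intro k hk
        have hk' : k < n := Finset.mem_range.1 hk
        have : (Finset.univ.sup fun j => D i j + mpMulVec (mpPow D k) x j)
            = mpMulVec (mpPow D (k+1)) x i := by
          rw [← mpPow_succ_comm, mpMulVec_assoc]
          rfl
        rw [this]
        exact pow_mulVec_le_star D hn hD (by omega) x i

lemma pow_mulVec_le_self {x : Fin n → MP} (h : ∀ i, mpMulVec D x i ≤ x i) (k : ℕ) (i : Fin n) :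
    mpMulVec (mpPow D k) x i ≤ x i := by
  induction k generalizing i with
  | zero => rw [show mpPow D 0 = mpId n from rfl, mpId_mulVec]
  | succ k ih =>
      rw [show mpPow D (k+1) = mpMul (mpPow D k) D from rfl, mpMulVec_assoc]
      exact le_trans (mpMulVec_mono (mpPow D k) h i) (ih i)

lemma star_mulVec_of_le (hn : 0 < n) {x : Fin n → MP} (h : ∀ i, mpMulVec D x i ≤ x i)
    (i : Fin n) : mpMulVec (mpStar D) x i = x i := by
  apply le_antisymm
  · rw [star_mulVec_eq]
    exact Finset.sup_le fun k _ => pow_mulVec_le_self D h k i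
  · rw [star_mulVec_eq]
    refine le_trans (le_of_eq ?_) (Finset.le_sup (f := fun k => mpMulVec (mpPow D k) x i)
      (Finset.mem_range.2 hn))
    show x i = mpMulVec (mpPow D 0) x i
    rw [show mpPow D 0 = mpId n from rfl, mpId_mulVec]
end star


section auxmain
variable {n : ℕ} (A B C : Fin n → Fin n → MP)

lemma mneg_coe (a : ℝ) : mneg (a : MP) = ((-a : ℝ) : MP) := rfl

lemma add_coe_le {m : MP} {a b : ℝ} (h : m + (a : MP) ≤ (b : MP)) :
    m ≤ ((b - a : ℝ) : MP) := by
  induction m using WithBot.recBotCoe with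
  | bot => exact bot_le
  | coe c =>
      rw [← WithBot.coe_add] at h
      exact WithBot.coe_le_coe.2 (by linarith [WithBot.coe_le_coe.1 h])

lemma mneg_le_of_coe_le {r : ℝ} {b : MP} (h : (r : MP) ≤ b) :
    mneg b ≤ ((-r : ℝ) : MP) := by
  induction b using WithBot.recBotCoe with
  | bot => exact absurd (le_bot_iff.1 h) WithBot.coe_ne_bot
  | coe a =>
      rw [mneg_coe]
      exact WithBot.coe_le_coe.2 (neg_le_neg (WithBot.coe_le_coe.1 h))

lemma star_diag (hn : 0 < n) (j : Fin n) : (0 : MP) ≤ mpStar (matD A B C) j j := by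
  have h2 : mpPow (matD A B C) 0 ≤ mpStar (matD A B C) :=
    Finset.le_sup (f := fun k => mpPow (matD A B C) k) (Finset.mem_range.2 hn)
  refine le_trans (le_of_eq ?_) (h2 j j)
  simp [mpPow, mpId]

lemma le_matAD (hn : 0 < n) (i j : Fin n) : A i j ≤ matAD A B C i j := by
  calc A i j = A i j + 0 := (add_zero _).symm
    _ ≤ A i j + mpStar (matD A B C) j j := add_le_add_right (star_diag A B C hn j) _
    _ ≤ matAD A B C i j :=
        Finset.le_sup (f := fun k => A i k + mpStar (matD A B C) k j) (Finset.mem_univ j)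

lemma colsup_coe (hn : 0 < n) (hAc : ∀ j, ∃ i, A i j ≠ ⊥) (j : Fin n) :
    ∃ r : ℝ, (Finset.univ.sup fun i => matAD A B C i j) = (r : MP) := by
  obtain ⟨i, hi⟩ := hAc j
  have h1 : A i j ≤ Finset.univ.sup fun i => matAD A B C i j :=
    le_trans (le_matAD A B C hn i j)
      (Finset.le_sup (f := fun i => matAD A B C i j) (Finset.mem_univ i))
  have hb : (Finset.univ.sup fun i => matAD A B C i j) ≠ ⊥ := by
    intro h; rw [h] at h1; exact hi (le_bot_iff.1 h1)
  obtain ⟨r, hr⟩ := WithBot.ne_bot_iff_exists.1 hb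
  exact ⟨r, hr.symm⟩

lemma vecV_coe (hn : 0 < n) (hAc : ∀ j, ∃ i, A i j ≠ ⊥) (j : Fin n) :
    ∃ r : ℝ, vecV A B C j = ((-r : ℝ) : MP)
      ∧ (Finset.univ.sup fun i => matAD A B C i j) = (r : MP) := by
  obtain ⟨r, hr⟩ := colsup_coe A B C hn hAc j
  exact ⟨r, by rw [vecV, hr, mneg_coe], hr⟩

lemma z_le_zero (hn : 0 < n) (hAc : ∀ j, ∃ i, A i j ≠ ⊥) (i : Fin n) :
    mpMulVec (matAD A B C) (vecV A B C) i ≤ 0 := by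
  apply Finset.sup_le
  intro j _
  obtain ⟨r, hv, hc⟩ := vecV_coe A B C hn hAc j
  calc matAD A B C i j + vecV A B C j ≤ (r : MP) + ((-r : ℝ) : MP) := by
        rw [hv]
        refine add_le_add_left ?_ _
        exact le_trans (Finset.le_sup (f := fun i => matAD A B C i j) (Finset.mem_univ i))
          (le_of_eq hc)
    _ = 0 := by rw [← WithBot.coe_add]; norm_num

lemma z_coe (hn : 0 < n) (hAr : ∀ i, ∃ j, A i j ≠ ⊥) (hAc : ∀ j, ∃ i, A i j ≠ ⊥) (i : Fin n) :
    ∃ r : ℝ, mpMulVec (matAD A B C) (vecV A B C) i = (r : MP) ∧ r ≤ 0 := by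
  obtain ⟨j, hj⟩ := hAr i
  obtain ⟨r, hv, _⟩ := vecV_coe A B C hn hAc j
  obtain ⟨a, ha⟩ := WithBot.ne_bot_iff_exists.1 hj
  have h1 : ((a + -r : ℝ) : MP) ≤ mpMulVec (matAD A B C) (vecV A B C) i := by
    calc ((a + -r : ℝ) : MP) = A i j + vecV A B C j := by rw [← ha, hv, WithBot.coe_add]
      _ ≤ matAD A B C i j + vecV A B C j := add_le_add_left (le_matAD A B C hn i j) _
      _ ≤ _ := Finset.le_sup (f := fun j => matAD A B C i j + vecV A B C j)
          (Finset.mem_univ j)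
  have hb : mpMulVec (matAD A B C) (vecV A B C) i ≠ ⊥ := by
    intro h; rw [h] at h1; exact WithBot.coe_ne_bot (le_bot_iff.1 h1)
  obtain ⟨s, hs⟩ := WithBot.ne_bot_iff_exists.1 hb
  refine ⟨s, hs.symm, ?_⟩
  have h2 := z_le_zero A B C hn hAc i
  rw [← hs] at h2
  exact_mod_cast h2

lemma supz (hn : 0 < n) (hAr : ∀ i, ∃ j, A i j ≠ ⊥) (hAc : ∀ j, ∃ i, A i j ≠ ⊥) :
    (Finset.univ.sup fun i => mpMulVec (matAD A B C) (vecV A B C) i) = 0 := by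
  apply le_antisymm
  · exact Finset.sup_le fun i _ => z_le_zero A B C hn hAc i
  · have hne : Nonempty (Fin n) := ⟨⟨0, hn⟩⟩
    obtain ⟨r, hv, hc⟩ := vecV_coe A B C hn hAc ⟨0, hn⟩
    obtain ⟨i0, _, hi0⟩ := Finset.exists_mem_eq_sup Finset.univ Finset.univ_nonempty
      (fun i => matAD A B C i ⟨0, hn⟩)
    have h1 : (0 : MP) ≤ mpMulVec (matAD A B C) (vecV A B C) i0 := by
      calc (0 : MP) = ((r + -r : ℝ) : MP) := by norm_num
        _ = matAD A B C i0 ⟨0, hn⟩ + vecV A B C ⟨0, hn⟩ := by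
            rw [WithBot.coe_add, hv, ← hi0, hc]
        _ ≤ _ := Finset.le_sup (f := fun j => matAD A B C i0 j + vecV A B C j)
            (Finset.mem_univ _)
    exact le_trans h1
      (Finset.le_sup (f := fun i => mpMulVec (matAD A B C) (vecV A B C) i)
        (Finset.mem_univ i0))
end auxmain

/-- Minimization of the maximum deviation of finish times: with A regular
(row- and column-regular), D = B ⊕ C⊗A satisfying Tr(D) ≤ 0, and f regular,
the minimum of max_i yᵢ - min_i yᵢ over regular (x,y) with A⊗x = y, B⊗x ≤ x,
C⊗y ≤ x, y ≤ f equals Δ = (A ⊗ D* ⊗ (1ᵀ⊗A⊗D*)⁻)⁻ ⊗ 1, attained at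
x = α ⊗ D* ⊗ (1ᵀ⊗A⊗D*)⁻, y = A⊗x, for any α ≤ (f⁻ ⊗ A ⊗ D* ⊗ (1ᵀ⊗A⊗D*)⁻)⁻¹. -/
theorem maxplus_min_finish_deviation {n : ℕ} (A B C : Fin n → Fin n → MP)
    (hAr : ∀ i, ∃ j, A i j ≠ ⊥) (hAc : ∀ j, ∃ i, A i j ≠ ⊥)
    (hD : ∀ k, 1 ≤ k → k ≤ n → mptr (mpPow (matD A B C) k) ≤ (0 : MP))
    (f : Fin n → ℝ) :
    (∀ x y : Fin n → ℝ,
      (∀ i, mpMulVec A (fun j => ((x j : ℝ) : MP)) i = ((y i : ℝ) : MP)) →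
      (∀ i, mpMulVec B (fun j => ((x j : ℝ) : MP)) i ≤ ((x i : ℝ) : MP)) →
      (∀ i, mpMulVec C (fun j => ((y j : ℝ) : MP)) i ≤ ((x i : ℝ) : MP)) →
      (∀ i, y i ≤ f i) →
      Delta A B C ≤ obj fun i => ((y i : ℝ) : MP)) ∧
    (∀ α : ℝ,
      ((α : ℝ) : MP) ≤ mneg (Finset.univ.sup fun i =>
          mpMulVec (matAD A B C) (vecV A B C) i + ((-f i : ℝ) : MP)) →
      (∀ i, mpMulVec B (xcand A B C α) i ≤ xcand A B C α i) ∧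
      (∀ i, mpMulVec C (mpMulVec A (xcand A B C α)) i ≤ xcand A B C α i) ∧
      (∀ i, mpMulVec A (xcand A B C α) i ≤ ((f i : ℝ) : MP)) ∧
      obj (mpMulVec A (xcand A B C α)) = Delta A B C) := by
  rcases Nat.eq_zero_or_pos n with hn0 | hn
  · subst hn0
    constructor
    · intro x y _ _ _ _
      have : Delta A B C = ⊥ := by simp [Delta]
      rw [this]; exact bot_le
    · intro α _
      refine ⟨fun i => i.elim0, fun i => i.elim0, fun i => i.elim0, ?_⟩
      simp [Delta, obj]
  · have hne : Nonempty (Fin n) := ⟨⟨0, hn⟩⟩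
    have hneF : (Finset.univ : Finset (Fin n)).Nonempty := Finset.univ_nonempty
    constructor
    · -- Part 1: lower bound
      intro x y hxy hB hC _
      set x' : Fin n → MP := fun j => ((x j : ℝ) : MP) with hx'
      have hCA : ∀ i, mpMulVec (mpMul C A) x' i ≤ x' i := by
        intro i
        rw [mpMulVec_assoc, show mpMulVec A x' = fun j => ((y j : ℝ) : MP) from funext hxy]
        exact hC i
      have hDx : ∀ i, mpMulVec (matD A B C) x' i ≤ x' i := by
        intro i
        apply Finset.sup_le
        intro j _
        rw [show matD A B C i j = B i j ⊔ mpMul C A i j from rfl, sup_add']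
        apply sup_le
        · exact le_trans (Finset.le_sup (f := fun j => B i j + x' j) (Finset.mem_univ j))
            (hB i)
        · exact le_trans
            (Finset.le_sup (f := fun j => mpMul C A i j + x' j) (Finset.mem_univ j)) (hCA i)
      have hSx : ∀ i, mpMulVec (mpStar (matD A B C)) x' i = x' i :=
        star_mulVec_of_le (matD A B C) hn hDx
      have hMx : ∀ i, mpMulVec (matAD A B C) x' i = ((y i : ℝ) : MP) := by
        intro i
        rw [matAD, mpMulVec_assoc,
          show mpMulVec (mpStar (matD A B C)) x' = x' from funext hSx]
        exact hxy i
      set Mb : ℝ := Finset.univ.sup' hneF y with hMb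
      set mb : ℝ := Finset.univ.inf' hneF y with hmb
      have hobj : ((Mb - mb : ℝ) : MP) ≤ obj (fun i => ((y i : ℝ) : MP)) := by
        obtain ⟨i1, _, h1⟩ := Finset.exists_mem_eq_sup' hneF y
        obtain ⟨i2, _, h2⟩ := Finset.exists_mem_eq_inf' hneF y
        have e1 : ((Mb : ℝ) : MP) ≤ Finset.univ.sup fun i => ((y i : ℝ) : MP) := by
          rw [hMb, h1]
          exact Finset.le_sup (f := fun i => ((y i : ℝ) : MP)) (Finset.mem_univ i1)
        have e2 : ((-mb : ℝ) : MP) ≤ Finset.univ.sup fun i => mneg ((y i : ℝ) : MP) := by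
          refine le_trans (le_of_eq ?_)
            (Finset.le_sup (f := fun i => mneg ((y i : ℝ) : MP)) (Finset.mem_univ i2))
          show ((-mb : ℝ) : MP) = mneg ((y i2 : ℝ) : MP)
          rw [mneg_coe, hmb, h2]
        calc ((Mb - mb : ℝ) : MP) = ((Mb : ℝ) : MP) + ((-mb : ℝ) : MP) := by
              rw [← WithBot.coe_add]; ring_nf
          _ ≤ _ := add_le_add e1 e2
      have hv : ∀ j, ((x j - Mb : ℝ) : MP) ≤ vecV A B C j := by
        intro j
        obtain ⟨r, hvr, hcr⟩ := vecV_coe A B C hn hAc j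
        have hcol : ∀ i', matAD A B C i' j ≤ ((Mb - x j : ℝ) : MP) := by
          intro i'
          apply add_coe_le
          calc matAD A B C i' j + ((x j : ℝ) : MP)
              ≤ mpMulVec (matAD A B C) x' i' :=
                Finset.le_sup (f := fun j => matAD A B C i' j + x' j) (Finset.mem_univ j)
            _ = ((y i' : ℝ) : MP) := hMx i'
            _ ≤ ((Mb : ℝ) : MP) := WithBot.coe_le_coe.2 (Finset.le_sup' y (Finset.mem_univ i'))
        have hr' : r ≤ Mb - x j := by
          have h3 : (Finset.univ.sup fun i => matAD A B C i j) ≤ ((Mb - x j : ℝ) : MP) :=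
            Finset.sup_le fun i' _ => hcol i'
          rw [hcr] at h3
          exact WithBot.coe_le_coe.1 h3
        rw [hvr]
        exact WithBot.coe_le_coe.2 (by linarith)
      have key : ∀ i, ((mb - Mb : ℝ) : MP) ≤ mpMulVec (matAD A B C) (vecV A B C) i := by
        intro i
        calc ((mb - Mb : ℝ) : MP) ≤ ((y i - Mb : ℝ) : MP) := by
              refine WithBot.coe_le_coe.2 ?_
              have := Finset.inf'_le y (Finset.mem_univ i)
              rw [← hmb] at this
              linarith
          _ = mpMulVec (matAD A B C) x' i + ((-Mb : ℝ) : MP) := by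
              rw [hMx i, ← WithBot.coe_add, sub_eq_add_neg]
          _ = Finset.univ.sup (fun j => (matAD A B C i j + x' j) + ((-Mb : ℝ) : MP)) :=
              (sup_add_const _ _ _).symm
          _ ≤ mpMulVec (matAD A B C) (vecV A B C) i := by
              apply Finset.sup_le
              intro j _
              refine le_trans (le_of_eq ?_) (le_trans (add_le_add_right (hv j) _)
                (Finset.le_sup (f := fun j => matAD A B C i j + vecV A B C j)
                  (Finset.mem_univ j)))
              rw [add_assoc]
              congr 1
      rw [Delta]
      apply Finset.sup_le
      intro i _
      refine le_trans (mneg_le_of_coe_le (key i)) ?_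
      rw [neg_sub]
      exact hobj
    · -- Part 2: the candidate solution
      intro α hα
      have hDxc : ∀ i, mpMulVec (matD A B C) (xcand A B C α) i ≤ xcand A B C α i := by
        intro i
        rw [show xcand A B C α
            = fun j => ((α : ℝ) : MP) + mpMulVec (mpStar (matD A B C)) (vecV A B C) j from rfl,
          mpMulVec_shift]
        exact add_le_add_right (star_fix (matD A B C) hn hD (vecV A B C) i) _
      have hBle : ∀ i, mpMulVec B (xcand A B C α) i ≤ xcand A B C α i := by
        intro i
        exact le_trans (mpMulVec_mono_mat (fun i j => (le_sup_left :
          B i j ≤ matD A B C i j)) _ i) (hDxc i)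
      have hCAle : ∀ i, mpMulVec C (mpMulVec A (xcand A B C α)) i ≤ xcand A B C α i := by
        intro i
        rw [← mpMulVec_assoc]
        exact le_trans (mpMulVec_mono_mat (fun i j => (le_sup_right :
          mpMul C A i j ≤ matD A B C i j)) _ i) (hDxc i)
      have hyc : ∀ i, mpMulVec A (xcand A B C α) i
          = ((α : ℝ) : MP) + mpMulVec (matAD A B C) (vecV A B C) i := by
        intro i
        rw [show xcand A B C α
            = fun j => ((α : ℝ) : MP) + mpMulVec (mpStar (matD A B C)) (vecV A B C) j from rfl,
          mpMulVec_shift, matAD, mpMulVec_assoc]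
      obtain ⟨zr, hzr⟩ := Classical.axiomOfChoice (z_coe A B C hn hAr hAc)
      have hzr' : ∀ i, mpMulVec (matAD A B C) (vecV A B C) i = ((zr i : ℝ) : MP) :=
        fun i => (hzr i).1
      have hzr0 : ∀ i, zr i ≤ 0 := fun i => (hzr i).2
      clear hzr
      have hbne : (Finset.univ.sup fun i =>
          mpMulVec (matAD A B C) (vecV A B C) i + ((-f i : ℝ) : MP)) ≠ ⊥ := by
        intro hb
        have h1 : mpMulVec (matAD A B C) (vecV A B C) ⟨0, hn⟩ + ((-f ⟨0, hn⟩ : ℝ) : MP) ≤ ⊥ := by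
          rw [← hb]
          exact Finset.le_sup (f := fun i =>
            mpMulVec (matAD A B C) (vecV A B C) i + ((-f i : ℝ) : MP)) (Finset.mem_univ _)
        rw [hzr' ⟨0, hn⟩, ← WithBot.coe_add] at h1
        exact WithBot.coe_ne_bot (le_bot_iff.1 h1)
      obtain ⟨g, hg⟩ := WithBot.ne_bot_iff_exists.1 hbne
      have hαg : α ≤ -g := by
        rw [← hg, mneg_coe] at hα
        exact WithBot.coe_le_coe.1 hα
      have hyf : ∀ i, mpMulVec A (xcand A B C α) i ≤ ((f i : ℝ) : MP) := by
        intro i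
        have hgi : zr i + -f i ≤ g := by
          have h2 : mpMulVec (matAD A B C) (vecV A B C) i + ((-f i : ℝ) : MP) ≤ (g : MP) := by
            rw [hg]
            exact Finset.le_sup (f := fun i =>
              mpMulVec (matAD A B C) (vecV A B C) i + ((-f i : ℝ) : MP)) (Finset.mem_univ i)
          rw [hzr' i, ← WithBot.coe_add] at h2
          exact WithBot.coe_le_coe.1 h2
        rw [hyc i, hzr' i, ← WithBot.coe_add]
        exact WithBot.coe_le_coe.2 (by linarith)
      refine ⟨hBle, hCAle, hyf, ?_⟩
      have hsupz := supz A B C hn hAr hAc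
      have h1 : (Finset.univ.sup fun i => mpMulVec A (xcand A B C α) i) = ((α : ℝ) : MP) := by
        rw [show (fun i => mpMulVec A (xcand A B C α) i)
            = fun i => ((α : ℝ) : MP) + mpMulVec (matAD A B C) (vecV A B C) i from funext hyc,
          sup_const_add, hsupz, add_zero]
      have h2 : (Finset.univ.sup fun i => mneg (mpMulVec A (xcand A B C α) i))
          = ((-α : ℝ) : MP) + Delta A B C := by
        have hterm : ∀ i, mneg (mpMulVec A (xcand A B C α) i)
            = ((-α : ℝ) : MP) + mneg (mpMulVec (matAD A B C) (vecV A B C) i) := by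
          intro i
          rw [hyc i, hzr' i, ← WithBot.coe_add, mneg_coe, mneg_coe, ← WithBot.coe_add]
          ring_nf
        rw [show (fun i => mneg (mpMulVec A (xcand A B C α) i))
            = fun i => ((-α : ℝ) : MP)
              + mneg (mpMulVec (matAD A B C) (vecV A B C) i) from funext hterm,
          sup_const_add, Delta]
      rw [obj, h1, h2, ← add_assoc, ← WithBot.coe_add]
      norm_num
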